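/- Pointwise lower bound on the information Gamma operators under the tensor condition (step in the proof of Theorem 2.2): assume there exists λ > 0 such that ⟨ℜ(x) v, v⟩ ≥ λ ‖v‖² for every x ∈ ℝ^d and every v ∈ ℝ^d. Then for every smooth f : ℝ^d → ℝ and every x ∈ ℝ^d, Γ₂(f,f)(x) + Γ_I(f,f)(x) ≥ ‖𝔥ess f(x)‖_F² + λ ‖∇f(x)‖²; in particular Γ₂(f,f) + Γ_I(f,f) ≥ λ Γ₁(f,f) pointwise. -/

import Mathlib

open MeasureTheory
open scoped BigOperators

noncomputable section

/-- `i`-th partial derivative of `f` at `x`, in the coordinate direction `i`. -/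
def pderiv' {d : ℕ} (f : EuclideanSpace ℝ (Fin d) → ℝ) (i : Fin d)
    (x : EuclideanSpace ℝ (Fin d)) : ℝ :=
  fderiv ℝ f x (EuclideanSpace.single i 1)

/-- second partial derivative `∂_i ∂_j f` at `x`. -/
def pderiv2 {d : ℕ} (f : EuclideanSpace ℝ (Fin d) → ℝ) (i j : Fin d)
    (x : EuclideanSpace ℝ (Fin d)) : ℝ :=
  pderiv' (fun y => pderiv' f j y) i x

/-- Laplacian `Δf`. -/
def lap {d : ℕ} (f : EuclideanSpace ℝ (Fin d) → ℝ) (x : EuclideanSpace ℝ (Fin d)) : ℝ :=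
  ∑ i, pderiv2 f i i x

/-- carré du champ `Γ₁(g,h) = ⟨∇g, ∇h⟩`. -/
def Gamma1 {d : ℕ} (g h : EuclideanSpace ℝ (Fin d) → ℝ) (x : EuclideanSpace ℝ (Fin d)) : ℝ :=
  ∑ i, pderiv' g i x * pderiv' h i x

/-- generator `L̃ h = ⟨∇ log π, ∇h⟩ + Δh`. -/
def genL {d : ℕ} (π h : EuclideanSpace ℝ (Fin d) → ℝ) (x : EuclideanSpace ℝ (Fin d)) : ℝ :=
  Gamma1 (fun y => Real.log (π y)) h x + lap h x

/-- Gamma two operator `Γ₂(f,f) = ½ L̃ Γ₁(f,f) − Γ₁(L̃f, f)`. -/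
def Gamma2 {d : ℕ} (π f : EuclideanSpace ℝ (Fin d) → ℝ) (x : EuclideanSpace ℝ (Fin d)) : ℝ :=
  (1/2 : ℝ) * genL π (fun y => Gamma1 f f y) x - Gamma1 (fun y => genL π f y) f x

/-- information Gamma operator `Γ_I(f,f) = −½⟨γ, ∇Γ₁(f,f)⟩ + (L̃f)·⟨∇f, γ⟩`. -/
def GammaI {d : ℕ} (π : EuclideanSpace ℝ (Fin d) → ℝ)
    (γ : EuclideanSpace ℝ (Fin d) → EuclideanSpace ℝ (Fin d))
    (f : EuclideanSpace ℝ (Fin d) → ℝ) (x : EuclideanSpace ℝ (Fin d)) : ℝ :=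
  -(1/2 : ℝ) * (∑ i, γ x i * pderiv' (fun y => Gamma1 f f y) i x)
    + genL π f x * (∑ i, pderiv' f i x * γ x i)

/-- the tensor `ℜ` of the paper:
`ℜ_{ij} = −∂²_{ij} log π + ((3−2d)/8) γ_i γ_j − (1/8) δ_{ij} Σ_k γ_k²
          + ½(γ_i ∂_j log π + γ_j ∂_i log π)`. -/
def Rtensor {d : ℕ} (π : EuclideanSpace ℝ (Fin d) → ℝ)
    (γ : EuclideanSpace ℝ (Fin d) → EuclideanSpace ℝ (Fin d))
    (i j : Fin d) (x : EuclideanSpace ℝ (Fin d)) : ℝ :=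
  -pderiv2 (fun y => Real.log (π y)) i j x
    + ((3 - 2 * (d : ℝ)) / 8) * γ x i * γ x j
    - (1/8 : ℝ) * (if i = j then ∑ k, (γ x k) ^ 2 else 0)
    + (1/2 : ℝ) * (γ x i * pderiv' (fun y => Real.log (π y)) j x
        + γ x j * pderiv' (fun y => Real.log (π y)) i x)

/-- the modified Hessian matrix `𝔥ess f`. -/
def hessM {d : ℕ} (γ : EuclideanSpace ℝ (Fin d) → EuclideanSpace ℝ (Fin d))
    (f : EuclideanSpace ℝ (Fin d) → ℝ) (i j : Fin d) (x : EuclideanSpace ℝ (Fin d)) : ℝ :=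
  if i = j then
    pderiv2 f i i x + (1/2 : ℝ) * (∑ k, γ x k * pderiv' f k x)
      - (1/2 : ℝ) * γ x i * pderiv' f i x
  else
    pderiv2 f i j x - (1/4 : ℝ) * (γ x i * pderiv' f j x + γ x j * pderiv' f i x)

/-- right-hand side of the Fokker–Planck equation `−∇·(p b) + Δp` with drift
`b = ∇ log π − γ`, evaluated at a density `p`. -/
def FPrhs {d : ℕ} (π : EuclideanSpace ℝ (Fin d) → ℝ)
    (γ : EuclideanSpace ℝ (Fin d) → EuclideanSpace ℝ (Fin d))
    (p : EuclideanSpace ℝ (Fin d) → ℝ) (x : EuclideanSpace ℝ (Fin d)) : ℝ :=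
  -(∑ i, pderiv' (fun y => p y * (pderiv' (fun z => Real.log (π z)) i y - γ y i)) i x)
    + lap p x

/-- `L̃* p = −∇·(p ∇ log π) + Δp`. -/
def Ltilstar {d : ℕ} (π p : EuclideanSpace ℝ (Fin d) → ℝ)
    (x : EuclideanSpace ℝ (Fin d)) : ℝ :=
  -(∑ i, pderiv' (fun y => p y * pderiv' (fun z => Real.log (π z)) i y) i x) + lap p x

/-- Arnold–Carlen tensor `(ℜ_AC)_{ij} = −∂²_{ij} log π − ½(∂_i γ_j + ∂_j γ_i)`. -/
def RAC {d : ℕ} (π : EuclideanSpace ℝ (Fin d) → ℝ)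
    (γ : EuclideanSpace ℝ (Fin d) → EuclideanSpace ℝ (Fin d))
    (i j : Fin d) (x : EuclideanSpace ℝ (Fin d)) : ℝ :=
  -pderiv2 (fun y => Real.log (π y)) i j x
    - (1/2 : ℝ) * (pderiv' (fun y => γ y j) i x + pderiv' (fun y => γ y i) j x)

/-!
By the product rule and the symmetry of second derivatives, Bochner's formula reads
`Γ₂(f,f) = ‖∇²f‖² − ∇² log π (∇f, ∇f)`, while `Γ_I(f,f) = −⟨γ, ∇²f ∇f⟩ + L̃f ⟨∇f, γ⟩`.
Since `𝔥ess f = ∇²f − ¼(γ ⊗ ∇f + ∇f ⊗ γ) + ½⟨γ, ∇f⟩ I`, expanding `‖𝔥ess f‖_F²` and the quadratic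
form of `ℜ` at `∇f` shows `Γ₂(f,f) + Γ_I(f,f) = ‖𝔥ess f‖_F² + ⟨ℜ ∇f, ∇f⟩` pointwise, and the
tensor condition bounds the last term below by `λ ‖∇f‖²`.
-/

open Finset
open scoped ContDiff

theorem sum_sum_eq_of_add_swap_eq {ι R : Type*} [Fintype ι] [Field R] [CharZero R]
    {F G : ι → ι → R} (h : ∀ i j, F i j + F j i = G i j + G j i) :
    ∑ i, ∑ j, F i j = ∑ i, ∑ j, G i j := by
  have hswap : ∀ H : ι → ι → R, 2 * ∑ i, ∑ j, H i j = ∑ i, ∑ j, (H i j + H j i) := by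
    intro H
    rw [two_mul]
    nth_rewrite 2 [sum_comm]
    simp only [sum_add_distrib]
  refine mul_left_cancel₀ (two_ne_zero (α := R)) ?_
  rw [hswap F, hswap G]
  simp only [h]

section PartialDerivatives

variable {d : ℕ} {f g : EuclideanSpace ℝ (Fin d) → ℝ} {i j : Fin d} {x : EuclideanSpace ℝ (Fin d)}

theorem pderiv'_add (hf : DifferentiableAt ℝ f x) (hg : DifferentiableAt ℝ g x) :
    pderiv' (fun y => f y + g y) i x = pderiv' f i x + pderiv' g i x := by
  simp [pderiv', fderiv_fun_add hf hg]

theorem pderiv'_mul (hf : DifferentiableAt ℝ f x) (hg : DifferentiableAt ℝ g x) :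
    pderiv' (fun y => f y * g y) i x = pderiv' f i x * g x + f x * pderiv' g i x := by
  simp [pderiv', fderiv_fun_mul hf hg]
  ring

theorem pderiv'_const_mul (c : ℝ) :
    pderiv' (fun y => c * f y) i x = c * pderiv' f i x := by
  simp [pderiv', show (fun y => c * f y) = c • f from rfl, fderiv_const_smul_field]

theorem pderiv'_sum {ι : Type*} (s : Finset ι) {F : ι → EuclideanSpace ℝ (Fin d) → ℝ}
    (hF : ∀ k ∈ s, DifferentiableAt ℝ (F k) x) :
    pderiv' (fun y => ∑ k ∈ s, F k y) i x = ∑ k ∈ s, pderiv' (F k) i x := by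
  simp [pderiv', fderiv_fun_sum hF]

theorem contDiff_pderiv' (hf : ContDiff ℝ ∞ f) (i : Fin d) :
    ContDiff ℝ ∞ (fun y => pderiv' f i y) :=
  (hf.fderiv_right (by norm_cast)).clm_apply contDiff_const

theorem pderiv2_comm (hf : ContDiffAt ℝ 2 f x) : pderiv2 f i j x = pderiv2 f j i x := by
  have hDf : DifferentiableAt ℝ (fderiv ℝ f) x :=
    (hf.fderiv_right (m := 1) le_rfl).differentiableAt one_ne_zero
  have hsecond : ∀ i j : Fin d, pderiv2 f i j x
      = fderiv ℝ (fderiv ℝ f) x (EuclideanSpace.single i 1) (EuclideanSpace.single j 1) := by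
    intro i j
    simp [pderiv2, pderiv', fderiv_clm_apply hDf (differentiableAt_const _)]
  rw [hsecond, hsecond]
  exact hf.isSymmSndFDerivAt (by simp) _ _

theorem pderiv'_lap (hf : ContDiff ℝ ∞ f) (i : Fin d) (x : EuclideanSpace ℝ (Fin d)) :
    pderiv' (fun y => lap f y) i x = lap (fun y => pderiv' f i y) x := by
  unfold lap
  rw [pderiv'_sum (F := fun j y => pderiv2 f j j y) _
    fun j _ => (contDiff_pderiv' (contDiff_pderiv' hf j) j).differentiable (by norm_cast) x]
  refine sum_congr rfl fun j _ => ?_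
  calc pderiv' (fun y => pderiv2 f j j y) i x
      = pderiv2 (fun y => pderiv' f j y) j i x :=
        pderiv2_comm ((contDiff_pderiv' hf j).of_le (by norm_cast)).contDiffAt
    _ = pderiv' (fun y => pderiv2 f i j y) j x := rfl
    _ = pderiv' (fun y => pderiv2 f j i y) j x := by
        simp only [fun y =>
          pderiv2_comm (i := i) (j := j) (x := y) (hf.of_le (by norm_cast)).contDiffAt]
    _ = pderiv2 (fun y => pderiv' f i y) j j x := rfl

end PartialDerivatives

section Algebra

variable {d : ℕ} {π f : EuclideanSpace ℝ (Fin d) → ℝ}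
  {γ : EuclideanSpace ℝ (Fin d) → EuclideanSpace ℝ (Fin d)} {x : EuclideanSpace ℝ (Fin d)}

theorem sum_sq_hessM (hA : ∀ i j, pderiv2 f i j x = pderiv2 f j i x) :
    ∑ i, ∑ j, hessM γ f i j x ^ 2
      = ∑ i, ∑ j, pderiv2 f i j x ^ 2 - ∑ i, ∑ j, γ x i * pderiv2 f i j x * pderiv' f j x
        + (∑ k, γ x k ^ 2) * (∑ k, pderiv' f k x ^ 2) / 8
        + (2 * d - 3) / 8 * (∑ k, γ x k * pderiv' f k x) ^ 2
        + (∑ k, γ x k * pderiv' f k x) * lap f x := by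
  set s := ∑ k, γ x k * pderiv' f k x
  set P : Fin d → Fin d → ℝ :=
    fun i j => pderiv2 f i j x - (γ x i * pderiv' f j x + γ x j * pderiv' f i x) / 4
  have hdiag : ∀ i j, hessM γ f i j x ^ 2
      = P i j ^ 2 + if i = j then s * pderiv2 f i i x - s * (γ x i * pderiv' f i x) / 2 + s ^ 2 / 4
        else 0 := by
    intro i j
    unfold hessM
    split_ifs with hij
    · subst hij; ring
    · ring
  have hoff : ∑ i, ∑ j, P i j ^ 2
      = ∑ i, ∑ j, pderiv2 f i j x ^ 2 - ∑ i, ∑ j, γ x i * pderiv2 f i j x * pderiv' f j x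
        + (∑ k, γ x k ^ 2) * (∑ k, pderiv' f k x ^ 2) / 8 + s * s / 8 := by
    simp only [P, s, sum_mul_sum, ← sum_sub_distrib, ← sum_add_distrib, sum_div]
    refine sum_sum_eq_of_add_swap_eq fun i j => ?_
    rw [hA j i]
    ring
  simp only [hdiag, sum_add_distrib, sum_ite_eq, mem_univ, if_true, hoff, sum_sub_distrib,
    ← mul_sum, ← sum_div, sum_const, card_univ, Fintype.card_fin, nsmul_eq_mul, lap]
  ring

theorem sum_Rtensor_mul_mul (v : Fin d → ℝ) :
    ∑ i, ∑ j, Rtensor π γ i j x * v i * v j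
      = -∑ i, ∑ j, pderiv2 (fun y => Real.log (π y)) i j x * v i * v j
        + (3 - 2 * d) / 8 * (∑ k, γ x k * v k) ^ 2
        - (∑ k, γ x k ^ 2) * (∑ k, v k ^ 2) / 8
        + (∑ k, γ x k * v k) * ∑ k, pderiv' (fun y => Real.log (π y)) k x * v k := by
  have hdiag : ∑ i, ∑ j, 1 / 8 * (if i = j then ∑ k, γ x k ^ 2 else 0) * v i * v j
      = (∑ k, γ x k ^ 2) * (∑ k, v k ^ 2) / 8 := by
    simp only [mul_ite, ite_mul, mul_zero, zero_mul, sum_ite_eq, mem_univ, if_true]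
    rw [mul_sum _ _ (∑ k, γ x k ^ 2), sum_div]
    exact sum_congr rfl fun i _ => by ring
  have hγγ : ∑ i, ∑ j, (3 - 2 * (d : ℝ)) / 8 * γ x i * γ x j * v i * v j
      = (3 - 2 * d) / 8 * (∑ k, γ x k * v k) ^ 2 := by
    rw [sq, sum_mul_sum, mul_sum]
    simp only [mul_sum]
    exact sum_congr rfl fun i _ => sum_congr rfl fun j _ => by ring
  have hγℓ : ∑ i, ∑ j, 1 / 2 * (γ x i * pderiv' (fun y => Real.log (π y)) j x
        + γ x j * pderiv' (fun y => Real.log (π y)) i x) * v i * v j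
      = (∑ k, γ x k * v k) * ∑ k, pderiv' (fun y => Real.log (π y)) k x * v k := by
    rw [sum_mul_sum]
    exact sum_sum_eq_of_add_swap_eq fun i j => by ring
  simp only [Rtensor, add_mul, sub_mul, neg_mul, sum_add_distrib, sum_sub_distrib,
    sum_neg_distrib]
  rw [hdiag, hγγ, hγℓ]

end Algebra

section GammaCalculus

variable {d : ℕ} {π f : EuclideanSpace ℝ (Fin d) → ℝ}

theorem pderiv'_Gamma1_self (hf : ContDiff ℝ ∞ f) (k : Fin d) (x : EuclideanSpace ℝ (Fin d)) :
    pderiv' (fun y => Gamma1 f f y) k x = 2 * ∑ i, pderiv' f i x * pderiv2 f k i x := by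
  have hDf : ∀ i, DifferentiableAt ℝ (fun y => pderiv' f i y) x :=
    fun i => (contDiff_pderiv' hf i).differentiable (by norm_cast) x
  unfold Gamma1
  rw [pderiv'_sum _ fun i _ => (hDf i).fun_mul (hDf i), mul_sum]
  exact sum_congr rfl fun i _ => by rw [pderiv'_mul (hDf i) (hDf i), pderiv2]; ring

theorem lap_Gamma1_self (hf : ContDiff ℝ ∞ f) (x : EuclideanSpace ℝ (Fin d)) :
    lap (fun y => Gamma1 f f y) x
      = 2 * (∑ i, ∑ j, pderiv2 f i j x ^ 2
        + ∑ i, pderiv' f i x * lap (fun y => pderiv' f i y) x) := by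
  have hDf : ∀ i, DifferentiableAt ℝ (fun y => pderiv' f i y) x :=
    fun i => (contDiff_pderiv' hf i).differentiable (by norm_cast) x
  have hD2f : ∀ j i, DifferentiableAt ℝ (fun y => pderiv2 f j i y) x :=
    fun j i => (contDiff_pderiv' (contDiff_pderiv' hf i) j).differentiable (by norm_cast) x
  have hgrad : ∀ j, pderiv2 (fun y => Gamma1 f f y) j j x
      = 2 * ∑ i, (pderiv2 f j i x ^ 2
          + pderiv' f i x * pderiv2 (fun y => pderiv' f i y) j j x) := by
    intro j
    rw [pderiv2, funext (pderiv'_Gamma1_self hf j), pderiv'_const_mul,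
      pderiv'_sum _ fun i _ => (hDf i).fun_mul (hD2f j i)]
    congr 1
    refine sum_congr rfl fun i _ => ?_
    rw [pderiv'_mul (hDf i) (hD2f j i), sq]
    rfl
  simp only [lap, hgrad, ← mul_sum, sum_add_distrib]
  congr 2
  rw [sum_comm]
  simp only [mul_sum]

theorem pderiv'_genL (hV : ContDiff ℝ ∞ fun y => Real.log (π y)) (hf : ContDiff ℝ ∞ f)
    (i : Fin d) (x : EuclideanSpace ℝ (Fin d)) :
    pderiv' (fun y => genL π f y) i x
      = ∑ j, (pderiv2 (fun y => Real.log (π y)) i j x * pderiv' f j x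
          + pderiv' (fun y => Real.log (π y)) j x * pderiv2 f i j x)
        + lap (fun y => pderiv' f i y) x := by
  have hprod : ∀ j, ContDiff ℝ ∞ fun y => pderiv' (fun z => Real.log (π z)) j y * pderiv' f j y :=
    fun j => (contDiff_pderiv' hV j).mul (contDiff_pderiv' hf j)
  have hlap : ContDiff ℝ ∞ fun y => lap f y :=
    ContDiff.sum fun j _ => contDiff_pderiv' (contDiff_pderiv' hf j) j
  unfold genL Gamma1
  rw [pderiv'_add ((ContDiff.sum fun j _ => hprod j).differentiable (by norm_cast) x)
      (hlap.differentiable (by norm_cast) x),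
    pderiv'_sum _ fun j _ => (hprod j).differentiable (by norm_cast) x, pderiv'_lap hf]
  congr 1
  refine sum_congr rfl fun j _ => pderiv'_mul ?_ ?_
  · exact (contDiff_pderiv' hV j).differentiable (by norm_cast) x
  · exact (contDiff_pderiv' hf j).differentiable (by norm_cast) x

theorem Gamma2_eq (hV : ContDiff ℝ ∞ fun y => Real.log (π y)) (hf : ContDiff ℝ ∞ f)
    (x : EuclideanSpace ℝ (Fin d)) :
    Gamma2 π f x = ∑ i, ∑ j, pderiv2 f i j x ^ 2
      - ∑ i, ∑ j, pderiv2 (fun y => Real.log (π y)) i j x * pderiv' f i x * pderiv' f j x := by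
  have hcomm : ∀ i j, pderiv2 f i j x = pderiv2 f j i x :=
    fun i j => pderiv2_comm (hf.of_le (by norm_cast)).contDiffAt
  have hdrift : Gamma1 (fun y => Real.log (π y)) (fun y => Gamma1 f f y) x
      = 2 * ∑ i, ∑ j, pderiv' (fun y => Real.log (π y)) j x * pderiv2 f i j x * pderiv' f i x := by
    rw [Gamma1]
    simp only [pderiv'_Gamma1_self hf, mul_sum]
    rw [sum_comm]
    exact sum_congr rfl fun i _ => sum_congr rfl fun j _ => by rw [hcomm]; ring
  have hgenL : Gamma1 (fun y => genL π f y) f x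
      = ∑ i, ∑ j, pderiv2 (fun y => Real.log (π y)) i j x * pderiv' f i x * pderiv' f j x
        + ∑ i, ∑ j, pderiv' (fun y => Real.log (π y)) j x * pderiv2 f i j x * pderiv' f i x
        + ∑ i, pderiv' f i x * lap (fun y => pderiv' f i y) x := by
    simp only [Gamma1, pderiv'_genL hV hf, add_mul, sum_mul, sum_add_distrib]
    congr 1
    · congr 1
      exact sum_congr rfl fun i _ => sum_congr rfl fun j _ => by ring
    · exact sum_congr rfl fun i _ => by ring
  rw [Gamma2, genL, hdrift, lap_Gamma1_self hf, hgenL]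
  ring

theorem GammaI_eq (γ : EuclideanSpace ℝ (Fin d) → EuclideanSpace ℝ (Fin d))
    (hf : ContDiff ℝ ∞ f) (x : EuclideanSpace ℝ (Fin d)) :
    GammaI π γ f x = -∑ i, ∑ j, γ x i * pderiv2 f i j x * pderiv' f j x
      + genL π f x * ∑ i, pderiv' f i x * γ x i := by
  rw [GammaI]
  congr 1
  simp only [pderiv'_Gamma1_self hf, mul_sum, ← sum_neg_distrib]
  exact sum_congr rfl fun i _ => sum_congr rfl fun j _ => by ring

theorem Gamma2_add_GammaI_eq (hV : ContDiff ℝ ∞ fun y => Real.log (π y))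
    (γ : EuclideanSpace ℝ (Fin d) → EuclideanSpace ℝ (Fin d)) (hf : ContDiff ℝ ∞ f)
    (x : EuclideanSpace ℝ (Fin d)) :
    Gamma2 π f x + GammaI π γ f x
      = ∑ i, ∑ j, hessM γ f i j x ^ 2
        + ∑ i, ∑ j, Rtensor π γ i j x * pderiv' f i x * pderiv' f j x := by
  have hcomm : ∀ i j, pderiv2 f i j x = pderiv2 f j i x :=
    fun i j => pderiv2_comm (hf.of_le (by norm_cast)).contDiffAt
  rw [Gamma2_eq hV hf, GammaI_eq γ hf, sum_sq_hessM hcomm, sum_Rtensor_mul_mul,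
    genL, Gamma1]
  simp only [mul_comm (pderiv' f _ x) (γ x _)]
  ring

end GammaCalculus

theorem gamma_lower_bound_pointwise_general
    (d : ℕ)
    (π : EuclideanSpace ℝ (Fin d) → ℝ) (hπ : ContDiff ℝ (⊤ : ℕ∞) π)
    (hπpos : ∀ x, 0 < π x)
    (γ : EuclideanSpace ℝ (Fin d) → EuclideanSpace ℝ (Fin d))
    (lam : ℝ)
    (hcond : ∀ (x v : EuclideanSpace ℝ (Fin d)),
      lam * ‖v‖ ^ 2 ≤ ∑ i, ∑ j, Rtensor π γ i j x * v i * v j)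
    (f : EuclideanSpace ℝ (Fin d) → ℝ) (hf : ContDiff ℝ (⊤ : ℕ∞) f)
    (x : EuclideanSpace ℝ (Fin d)) :
    (∑ i, ∑ j, (hessM γ f i j x) ^ 2) + lam * Gamma1 f f x ≤
        Gamma2 π f x + GammaI π γ f x ∧
      lam * Gamma1 f f x ≤ Gamma2 π f x + GammaI π γ f x := by
  have hV : ContDiff ℝ ∞ fun y => Real.log (π y) := hπ.log fun y => (hπpos y).ne'
  set grad : EuclideanSpace ℝ (Fin d) := WithLp.toLp 2 fun i => pderiv' f i x
  have hgrad : ‖grad‖ ^ 2 = Gamma1 f f x := by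
    rw [EuclideanSpace.norm_sq_eq]
    simp [grad, Gamma1, sq]
  have hR : lam * Gamma1 f f x ≤ ∑ i, ∑ j, Rtensor π γ i j x * pderiv' f i x * pderiv' f j x :=
    hgrad ▸ hcond x grad
  have hhess : 0 ≤ ∑ i, ∑ j, hessM γ f i j x ^ 2 := by positivity
  rw [Gamma2_add_GammaI_eq hV γ hf x]
  constructor <;> linarith

/-- Step in the proof of Theorem 2.2: under the tensor condition `ℜ ⪰ λ I`,
pointwise `Γ₂(f,f) + Γ_I(f,f) ≥ ‖𝔥ess f‖_F² + λ‖∇f‖²`, and in particular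
`Γ₂(f,f) + Γ_I(f,f) ≥ λ Γ₁(f,f)`. -/
theorem gamma_lower_bound_pointwise
    (d : ℕ) (hd : 1 ≤ d)
    (π : EuclideanSpace ℝ (Fin d) → ℝ) (hπ : ContDiff ℝ (⊤ : ℕ∞) π)
    (hπpos : ∀ x, 0 < π x)
    (γ : EuclideanSpace ℝ (Fin d) → EuclideanSpace ℝ (Fin d))
    (hγ : ContDiff ℝ (⊤ : ℕ∞) γ)
    (lam : ℝ) (hlam : 0 < lam)
    (hcond : ∀ (x v : EuclideanSpace ℝ (Fin d)),
      lam * ‖v‖ ^ 2 ≤ ∑ i, ∑ j, Rtensor π γ i j x * v i * v j)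
    (f : EuclideanSpace ℝ (Fin d) → ℝ) (hf : ContDiff ℝ (⊤ : ℕ∞) f)
    (x : EuclideanSpace ℝ (Fin d)) :
    (∑ i, ∑ j, (hessM γ f i j x) ^ 2) + lam * Gamma1 f f x ≤
        Gamma2 π f x + GammaI π γ f x ∧
      lam * Gamma1 f f x ≤ Gamma2 π f x + GammaI π γ f x :=
  gamma_lower_bound_pointwise_general d π hπ hπpos γ lam hcond f hf x

end
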